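/- arXiv:2411.08258 — 3 statements merged into one kernel-verified Lean document; each statement's English description precedes it below -/
import Mathlib

section
/- The map Φ : V_n → S_n is a bijection. (In particular, every permutation π ∈ S_n can be written uniquely as π = κ_{n−2,a_1} ∘ κ_{n−3,a_2} ∘ ⋯ ∘ κ_{1,a_{n−2}} ∘ κ_{0,a_{n−1}} with 1 ≤ a_j ≤ j+1 for each j.) -/
/-- Underlying function of the suffix block transposition `κ_{i,s}`:
`j ↦ j` for `j < i`, and `j ↦ i + ((j - i + s) mod (n - i))` for `i ≤ j ≤ n-1`. -/
def kappaFun (n i s : ℕ) (j : Fin n) : Fin n :=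
  if h : (j : ℕ) < i then j
  else ⟨i + (((j : ℕ) - i + s) % (n - i)), by
    have hj := j.isLt
    have hpos : 0 < n - i := by omega
    have hm := Nat.mod_lt ((j : ℕ) - i + s) hpos
    omega⟩

theorem kappaFun_injective (n i s : ℕ) : Function.Injective (kappaFun n i s) := by
  intro a b hab
  unfold kappaFun at hab
  by_cases ha : (a : ℕ) < i <;> by_cases hb : (b : ℕ) < i
  · rw [dif_pos ha, dif_pos hb] at hab
    exact hab
  · rw [dif_pos ha, dif_neg hb] at hab
    have h := congrArg Fin.val hab
    simp only at h
    omega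
  · rw [dif_neg ha, dif_pos hb] at hab
    have h := congrArg Fin.val hab
    simp only at h
    omega
  · rw [dif_neg ha, dif_neg hb] at hab
    have h := congrArg Fin.val hab
    simp only at h
    have h1 : ((a : ℕ) - i + s) % (n - i) = ((b : ℕ) - i + s) % (n - i) := by omega
    have h2 : ((a : ℕ) - i) % (n - i) = ((b : ℕ) - i) % (n - i) :=
      Nat.ModEq.add_right_cancel' s h1
    have ha' : (a : ℕ) - i < n - i := by have := a.isLt; omega
    have hb' : (b : ℕ) - i < n - i := by have := b.isLt; omega
    rw [Nat.mod_eq_of_lt ha', Nat.mod_eq_of_lt hb'] at h2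
    exact Fin.ext (by omega)

/-- The suffix block transposition `κ_{i,s}` as a permutation of `Fin n`. -/
noncomputable def kappa (n i s : ℕ) : Equiv.Perm (Fin n) :=
  Equiv.ofBijective _ (Finite.injective_iff_bijective.mp (kappaFun_injective n i s))

/-- `V_n`: vectors `[a_0,…,a_{n-1}]` with `1 ≤ a_j ≤ j+1` for each `j`. -/
def Vn (n : ℕ) : Set (Fin n → ℕ) :=
  {a | ∀ j : Fin n, 1 ≤ a j ∧ a j ≤ (j : ℕ) + 1}

/-- `Φ([a_0,…,a_{n-1}]) = κ_{n-2,a_1} ∘ κ_{n-3,a_2} ∘ ⋯ ∘ κ_{1,a_{n-2}} ∘ κ_{0,a_{n-1}}`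
(the factor for `j = 0` is `κ_{n-1,a_0}`, which is the identity permutation). -/
noncomputable def Phi (n : ℕ) (a : Fin n → ℕ) : Equiv.Perm (Fin n) :=
  ((List.finRange n).map (fun (j : Fin n) => kappa n (n - 1 - (j : ℕ)) (a j))).prod

/-- `W_{T,n}`: vectors in `V_n` whose parity (sum of components) is `≡ T (mod n)`. -/
def Wset (n : ℕ) (T : ℤ) : Set (Fin n → ℕ) :=
  {a | a ∈ Vn n ∧ Int.ModEq (n : ℤ) ((∑ j, a j : ℕ) : ℤ) T}

/-- `C_{T,n} = {(Φ(α))⁻¹ : α ∈ W_{T,n}}`. -/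
def Cset (n : ℕ) (T : ℤ) : Set (Equiv.Perm (Fin n)) :=
  {π | ∃ a ∈ Wset n T, π = (Phi n a)⁻¹}

/-- `cinv n π j = π⁻¹(j)` as a natural number (junk value `0` out of range). -/
def cinv (n : ℕ) (π : Equiv.Perm (Fin n)) (j : ℕ) : ℕ :=
  if h : j < n then (π.symm ⟨j, h⟩ : ℕ) else 0

/-- The `i`-th component of a vector indexed by `Fin n` (junk value `0` out of range). -/
def Rcomp (n : ℕ) (v : Fin n → ℕ) (i : ℕ) : ℕ :=
  if h : i < n then v ⟨i, h⟩ else 0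

/-!
Since `|V_n| = n! = |S_n|`, it suffices that `Φ` is injective on `V_n`. Write `P_k` for the product
of the first `k` factors of `Φ(a)`, so `P_{k+1} = P_k ∘ κ_{n-1-k, a_k}`. Every factor of `P_k`
fixes the points below `n - k`, in particular `n - 1 - k`, while `κ_{n-1-k, a_k}` sends `n - a_k`
to `n - 1 - k`; hence `P_{k+1}⁻¹(n - 1 - k) = n - a_k`. So `P_{k+1}` determines `a_k`, and then
`P_k`, and induction on `k` recovers all of `a` from `Φ(a) = P_n`.
-/

lemma kappa_apply_of_lt {n i : ℕ} (s : ℕ) {x : Fin n} (hx : (x : ℕ) < i) : kappa n i s x = x := by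
  simp [kappa, kappaFun, hx]

lemma kappa_apply_sub {n i s : ℕ} (hs : 1 ≤ s) (hsi : i + s ≤ n) :
    kappa n i s ⟨n - s, by omega⟩ = ⟨i, by omega⟩ := by
  have hni : n - s - i + s = n - i := by omega
  apply Fin.ext
  simp only [kappa, Equiv.ofBijective_apply, kappaFun, dif_neg (show ¬ n - s < i by omega), hni,
    Nat.mod_self, add_zero]

noncomputable def phiPrefix (n : ℕ) (a : Fin n → ℕ) (k : ℕ) : Equiv.Perm (Fin n) :=
  (((List.finRange n).map fun j : Fin n => kappa n (n - 1 - (j : ℕ)) (a j)).take k).prod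

lemma phiPrefix_self (n : ℕ) (a : Fin n → ℕ) : phiPrefix n a n = Phi n a := by
  rw [phiPrefix, Phi, List.take_of_length_le (by simp)]

lemma phiPrefix_succ (n : ℕ) (a : Fin n → ℕ) {k : ℕ} (hk : k < n) :
    phiPrefix n a (k + 1) = phiPrefix n a k * kappa n (n - 1 - k) (a ⟨k, hk⟩) := by
  rw [phiPrefix, phiPrefix, List.prod_take_succ _ _ (by simpa using hk)]
  simp

lemma phiPrefix_apply_of_add_lt (n : ℕ) (a : Fin n → ℕ) (k : ℕ) {x : Fin n} (hx : (x : ℕ) + k < n) :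
    phiPrefix n a k x = x := by
  induction k with
  | zero => simp [phiPrefix]
  | succ k ih =>
    rw [phiPrefix_succ n a (by omega), Equiv.Perm.mul_apply, kappa_apply_of_lt _ (by omega)]
    exact ih (by omega)

lemma phiPrefix_succ_apply_sub {n : ℕ} {a : Fin n → ℕ} (ha : a ∈ Vn n) {k : ℕ} (hk : k < n) :
    phiPrefix n a (k + 1) ⟨n - a ⟨k, hk⟩, by have := (ha ⟨k, hk⟩).1; omega⟩ =
      ⟨n - 1 - k, by omega⟩ := by
  obtain ⟨hpos, hle⟩ : 1 ≤ a ⟨k, hk⟩ ∧ a ⟨k, hk⟩ ≤ k + 1 := ha ⟨k, hk⟩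
  rw [phiPrefix_succ n a hk, Equiv.Perm.mul_apply, kappa_apply_sub hpos (by omega)]
  exact phiPrefix_apply_of_add_lt n a k (show n - 1 - k + k < n by omega)

lemma eq_of_phiPrefix_eq {n : ℕ} {a b : Fin n → ℕ} (ha : a ∈ Vn n) (hb : b ∈ Vn n) {k : ℕ}
    (hk : k ≤ n) (hab : phiPrefix n a k = phiPrefix n b k) (j : Fin n) (hj : (j : ℕ) < k) :
    a j = b j := by
  induction k with
  | zero => omega
  | succ k ih =>
    have hk' : k < n := by omega
    have hlast : a ⟨k, hk'⟩ = b ⟨k, hk'⟩ := by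
      have h := phiPrefix_succ_apply_sub hb hk'
      rw [← hab, ← phiPrefix_succ_apply_sub ha hk', EmbeddingLike.apply_eq_iff_eq, Fin.mk.injEq] at h
      have : a ⟨k, hk'⟩ ≤ k + 1 := (ha ⟨k, hk'⟩).2
      have : b ⟨k, hk'⟩ ≤ k + 1 := (hb ⟨k, hk'⟩).2
      omega
    rcases Nat.lt_succ_iff_lt_or_eq.mp hj with hjk | hjk
    · rw [phiPrefix_succ n a hk', phiPrefix_succ n b hk', hlast] at hab
      exact ih (by omega) (mul_right_cancel hab) hjk
    · obtain rfl : j = ⟨k, hk'⟩ := Fin.ext hjk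
      exact hlast

lemma phi_injOn (n : ℕ) : Set.InjOn (Phi n) (Vn n) := by
  intro a ha b hb hab
  rw [← phiPrefix_self, ← phiPrefix_self] at hab
  funext j
  exact eq_of_phiPrefix_eq ha hb le_rfl hab j j.isLt

lemma ncard_Vn (n : ℕ) : (Vn n).ncard = n.factorial := by
  have hVn : Vn n = ↑(Fintype.piFinset fun j : Fin n => Finset.Icc 1 ((j : ℕ) + 1)) := by
    ext a
    simp only [Vn, Set.mem_ofPred_eq, Finset.mem_coe, Fintype.mem_piFinset, Finset.mem_Icc]
  rw [hVn, Set.ncard_coe_finset, Fintype.card_piFinset]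
  simp only [Nat.card_Icc, add_tsub_cancel_right]
  rw [Fin.prod_univ_eq_prod_range (· + 1), Finset.prod_range_add_one_eq_factorial]

theorem stmt_0_general (n : ℕ) :
    Set.BijOn (Phi n) (Vn n) Set.univ := by
  have hinj := phi_injOn n
  have himage : Phi n '' Vn n = Set.univ := by
    refine Set.eq_of_subset_of_ncard_le (Set.subset_univ _) ?_ Set.finite_univ
    rw [hinj.ncard_image, ncard_Vn, Set.ncard_univ, Nat.card_perm, Nat.card_fin]
  exact himage ▸ hinj.bijOn_image

theorem stmt_0 (n : ℕ) (hn : 2 ≤ n) :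
    Set.BijOn (Phi n) (Vn n) Set.univ :=
  stmt_0_general n
end

section
/- Let ρ ∈ S_n and set c_j = ρ^{−1}(j) for j = 0,…,n−1. For j = 1,…,n−1 define b̃_j = 1 if c_j > c_{j−1} and b̃_j = 0 otherwise. Then parity(R(ρ)) + Σ_{j=1}^{n−1} j·b̃_j ≡ 0 (mod n). -/
-- ### my additions

/-- natural-number version of `kappaFun`. -/
def kapN (n i s j : ℕ) : ℕ := if j < i then j else i + ((j - i + s) % (n - i))

lemma kappa_apply (n i s : ℕ) (j : Fin n) : ((kappa n i s j : Fin n) : ℕ) = kapN n i s (j : ℕ) := by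
  show ((kappaFun n i s j : Fin n) : ℕ) = _
  unfold kappaFun kapN
  split_ifs with h <;> rfl

lemma kapN_kapN (n i s u j : ℕ) : kapN n i s (kapN n i u j) = kapN n i (u + s) j := by
  unfold kapN
  by_cases h : j < i
  · simp [h]
  · rw [if_neg h, if_neg (by omega), if_neg h]
    congr 1
    rw [Nat.add_sub_cancel_left, Nat.mod_add_mod, Nat.add_assoc]

lemma kapN_zero (n i j : ℕ) (hj : j < n) : kapN n i 0 j = j := by
  unfold kapN
  split_ifs with h
  · rfl
  · rw [Nat.add_zero, Nat.mod_eq_of_lt (by omega)]; omega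

lemma kapN_full (n i j : ℕ) (hj : j < n) : kapN n i (n - i) j = j := by
  unfold kapN
  split_ifs with h
  · rfl
  · rw [Nat.add_mod_right, Nat.mod_eq_of_lt (by omega)]; omega

lemma kappa_mul (n i s u : ℕ) : kappa n i s * kappa n i u = kappa n i (u + s) := by
  apply Equiv.ext; intro j
  apply Fin.ext
  rw [Equiv.Perm.mul_apply, kappa_apply, kappa_apply, kappa_apply, kapN_kapN]

lemma kappa_zero (n i : ℕ) : kappa n i 0 = 1 := by
  apply Equiv.ext; intro j
  apply Fin.ext
  rw [kappa_apply, kapN_zero n i j j.isLt]; rfl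

lemma kappa_full (n i : ℕ) : kappa n i (n - i) = 1 := by
  apply Equiv.ext; intro j
  apply Fin.ext
  rw [kappa_apply, kapN_full n i j j.isLt]; rfl

lemma kappa_inv (n i s : ℕ) (h : s ≤ n - i) : (kappa n i s)⁻¹ = kappa n i (n - i - s) := by
  apply inv_eq_of_mul_eq_one_right
  rw [kappa_mul]
  rw [show n - i - s + s = n - i by omega, kappa_full]

lemma kappa_fix (n i s : ℕ) (j : Fin n) (h : (j : ℕ) < i) : kappa n i s j = j := by
  apply Fin.ext
  rw [kappa_apply]
  unfold kapN
  rw [if_pos h]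

noncomputable def phiAux (n : ℕ) (b : ℕ → ℕ) : ℕ → Equiv.Perm (Fin n)
  | 0 => 1
  | k+1 => phiAux n b k * kappa n (n-1-k) (b k)

lemma phi_eq (n : ℕ) (a : Fin n → ℕ) : Phi n a = phiAux n (Rcomp n a) n := by
  have key : ∀ k, k ≤ n →
      (((List.finRange n).map (fun j : Fin n => kappa n (n - 1 - (j:ℕ)) (a j))).take k).prod
        = phiAux n (Rcomp n a) k := by
    intro k hk
    induction k with
    | zero => simp [phiAux]
    | succ k ih =>
      have hk' : k < n := hk
      rw [List.take_succ, List.prod_append, ih (le_of_lt hk')]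
      have hlen : k < ((List.finRange n).map
          (fun j : Fin n => kappa n (n - 1 - (j:ℕ)) (a j))).length := by
        simp [hk']
      rw [List.getElem?_eq_getElem hlen]
      simp only [List.getElem_map, List.getElem_finRange, Option.toList_some, List.prod_cons,
        List.prod_nil, mul_one]
      have hstep : phiAux n (Rcomp n a) (k+1)
          = phiAux n (Rcomp n a) k * kappa n (n-1-k) (Rcomp n a k) := rfl
      rw [hstep, Rcomp, dif_pos hk']
      rfl
  have h := key n le_rfl
  rwa [List.take_of_length_le (by simp)] at h

noncomputable def tauP (n : ℕ) (b : ℕ → ℕ) : ℕ → Equiv.Perm (Fin n)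
  | 0 => 1
  | k+1 => kappa n (n-1-k) (k+1 - b k) * tauP n b k

lemma tauP_eq_inv (n : ℕ) (b : ℕ → ℕ) (hb : ∀ j, j < n → b j ≤ j+1) :
    ∀ k, k ≤ n → tauP n b k = (phiAux n b k)⁻¹ := by
  intro k hk
  induction k with
  | zero => show (1 : Equiv.Perm (Fin n)) = 1⁻¹; rw [inv_one]
  | succ k ih =>
    have hk' : k < n := hk
    have h1 : tauP n b (k+1) = kappa n (n-1-k) (k+1 - b k) * tauP n b k := rfl
    have h2 : phiAux n b (k+1) = phiAux n b k * kappa n (n-1-k) (b k) := rfl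
    rw [h1, h2, mul_inv_rev, ih (le_of_lt hk'), kappa_inv _ _ _ (by have := hb k hk'; omega)]
    have e : n - (n-1-k) - b k = k+1 - b k := by omega
    rw [e]

lemma tauP_fix (n : ℕ) (b : ℕ → ℕ) :
    ∀ k, k ≤ n → ∀ j : Fin n, (j : ℕ) < n - k → tauP n b k j = j := by
  intro k hk
  induction k with
  | zero => intro j _; rfl
  | succ k ih =>
    intro j hj
    have h1 : tauP n b (k+1) j = kappa n (n-1-k) (k+1 - b k) (tauP n b k j) := rfl
    rw [h1, ih (by omega) j (by omega), kappa_fix]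
    omega

/-- value of `σ` at `j`, as a natural number. -/
def appv (n : ℕ) (σ : Equiv.Perm (Fin n)) (j : ℕ) : ℕ :=
  if h : j < n then (σ ⟨j, h⟩ : ℕ) else 0

lemma appv_lt (n : ℕ) (σ : Equiv.Perm (Fin n)) (j : ℕ) (hj : j < n) : appv n σ j < n := by
  unfold appv; rw [dif_pos hj]; exact (σ ⟨j, hj⟩).isLt

lemma appv_mul (n m t j : ℕ) (τ : Equiv.Perm (Fin n)) (hj : j < n) :
    appv n (kappa n m t * τ) j = kapN n m t (appv n τ j) := by
  unfold appv
  rw [dif_pos hj, dif_pos hj, Equiv.Perm.mul_apply, kappa_apply]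

lemma appv_gt (n m : ℕ) (τ : Equiv.Perm (Fin n)) (hτ : ∀ j : Fin n, (j : ℕ) ≤ m → τ j = j)
    (j : ℕ) (hj : j < n) (hjm : m < j) : m < appv n τ j := by
  unfold appv
  rw [dif_pos hj]
  by_contra h
  push_neg at h
  have h2 : τ (τ ⟨j, hj⟩) = τ ⟨j, hj⟩ := hτ _ h
  have h3 : τ ⟨j, hj⟩ = ⟨j, hj⟩ := τ.injective h2
  rw [h3] at h
  simp only [] at h
  omega

lemma appv_le (n m : ℕ) (τ : Equiv.Perm (Fin n)) (hτ : ∀ j : Fin n, (j : ℕ) ≤ m → τ j = j)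
    (j : ℕ) (hj : j < n) (hjm : j ≤ m) : appv n τ j = j := by
  unfold appv
  rw [dif_pos hj, hτ _ hjm]

def Fstat (n : ℕ) (σ : Equiv.Perm (Fin n)) : ℕ :=
  ∑ j ∈ Finset.Icc 1 (n-1), j * (if appv n σ (j-1) < appv n σ j then 1 else 0)

lemma Fstat_range (n : ℕ) (hn : 1 ≤ n) (σ : Equiv.Perm (Fin n)) :
    Fstat n σ = ∑ i ∈ Finset.range (n-1), (i+1) * (if appv n σ i < appv n σ (i+1) then 1 else 0) := by
  unfold Fstat
  rw [show Finset.Icc 1 (n-1) = Finset.Ico 1 n by rw [← Finset.Ico_add_one_right_eq_Icc]; congr 1; omega]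
  rw [Finset.sum_Ico_eq_sum_range]
  apply Finset.sum_congr rfl
  intro i _
  have e1 : 1 + i - 1 = i := by omega
  have e2 : 1 + i = i + 1 := by omega
  rw [e1, e2]

lemma sum_indicator (N c : ℕ) : ∑ i ∈ Finset.range N, (if c ≤ i then 1 else 0) = N - c := by
  induction N with
  | zero => simp
  | succ N ih => rw [Finset.sum_range_succ, ih]; split_ifs <;> omega

lemma pointwise (n m s u v : ℕ) (hm : m < n) (hs1 : 1 ≤ s) (hs2 : s ≤ n - m)
    (hu : u < n) (hv : v < n) (huv : u ≠ v)
    (h1 : u < m → v ≤ m) (h2 : v < m → u < m) :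
    (if kapN n m (n-m-s) u < kapN n m (n-m-s) v then 1 else 0) + (if m + s ≤ v then 1 else 0)
      = (if u < v then 1 else 0) + (if m + s ≤ u then 1 else 0) := by
  have hts : (n - m - s) + s = n - m := by omega
  unfold kapN
  by_cases hum : u < m <;> by_cases hvm : v < m
  · rw [if_pos hum, if_pos hvm]; split_ifs <;> omega
  · -- u < m, v ≥ m, so v = m
    have hv' : v = m := by have := h1 hum; omega
    rw [if_pos hum, if_neg hvm]
    have e : (v - m + (n-m-s)) % (n - m) = n-m-s := by
      rw [hv', Nat.sub_self, Nat.zero_add]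
      exact Nat.mod_eq_of_lt (by omega)
    rw [e]
    split_ifs <;> omega
  · exact absurd (h2 hvm) hum
  · rw [if_neg hum, if_neg hvm]
    have eA : (u - m + (n-m-s)) % (n-m)
        = if u - m + (n-m-s) < n - m then u - m + (n-m-s) else u - m + (n-m-s) - (n-m) := by
      split_ifs with h
      · exact Nat.mod_eq_of_lt h
      · rw [Nat.mod_eq_sub_mod (by omega), Nat.mod_eq_of_lt (by omega)]
    have eB : (v - m + (n-m-s)) % (n-m)
        = if v - m + (n-m-s) < n - m then v - m + (n-m-s) else v - m + (n-m-s) - (n-m) := by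
      split_ifs with h
      · exact Nat.mod_eq_of_lt h
      · rw [Nat.mod_eq_sub_mod (by omega), Nat.mod_eq_of_lt (by omega)]
    rw [eA, eB]
    split_ifs <;> omega

lemma step (n m s : ℕ) (hm : m < n) (hs1 : 1 ≤ s) (hs2 : s ≤ n - m)
    (τ : Equiv.Perm (Fin n)) (hτ : ∀ j : Fin n, (j:ℕ) ≤ m → τ j = j) :
    Fstat n (kappa n m (n - m - s) * τ) + n * (if m + s ≤ appv n τ (n-1) then 1 else 0)
      = Fstat n τ + (n - m - s) := by
  obtain ⟨n', rfl⟩ : ∃ n', n = n' + 1 := ⟨n - 1, by omega⟩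
  have hNsub : n' + 1 - 1 = n' := by omega
  rw [hNsub]
  -- pointwise, multiplied by (i+1)
  have key : ∀ i ∈ Finset.range n',
      (i+1) * (if appv (n'+1) (kappa (n'+1) m ((n'+1)-m-s) * τ) i < appv (n'+1) (kappa (n'+1) m ((n'+1)-m-s) * τ) (i+1) then 1 else 0)
        + (i+1) * (if m + s ≤ appv (n'+1) τ (i+1) then 1 else 0)
      = (i+1) * (if appv (n'+1) τ i < appv (n'+1) τ (i+1) then 1 else 0)
        + (i+1) * (if m + s ≤ appv (n'+1) τ i then 1 else 0) := by
    intro i hi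
    rw [Finset.mem_range] at hi
    have hin : i < (n'+1) := by omega
    have hin' : i + 1 < (n'+1) := by omega
    rw [appv_mul (n'+1) m ((n'+1)-m-s) i τ hin, appv_mul (n'+1) m ((n'+1)-m-s) (i+1) τ hin']
    have hG1 : appv (n'+1) τ i < (n'+1) := appv_lt (n'+1) τ i hin
    have hG2 : appv (n'+1) τ (i+1) < (n'+1) := appv_lt (n'+1) τ (i+1) hin'
    have hne : appv (n'+1) τ i ≠ appv (n'+1) τ (i+1) := by
      intro h
      unfold appv at h
      rw [dif_pos hin, dif_pos hin'] at h
      have h' : τ ⟨i, hin⟩ = τ ⟨i+1, hin'⟩ := Fin.ext h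
      have h'' := τ.injective h'
      have := congrArg Fin.val h''
      simp only at this
      omega
    have h1 : appv (n'+1) τ i < m → appv (n'+1) τ (i+1) ≤ m := by
      intro h
      have him : i ≤ m := by
        by_contra hc
        push_neg at hc
        have := appv_gt (n'+1) m τ hτ i hin hc
        omega
      have him' : i < m := by
        rcases Nat.lt_or_ge i m with h' | h'
        · exact h'
        · have hieq : i = m := by omega
          rw [appv_le (n'+1) m τ hτ i hin (le_of_eq hieq)] at h
          omega
      rw [appv_le (n'+1) m τ hτ (i+1) hin' (by omega)]
      omega
    have h2 : appv (n'+1) τ (i+1) < m → appv (n'+1) τ i < m := by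
      intro h
      have him : i + 1 ≤ m := by
        by_contra hc
        push_neg at hc
        have := appv_gt (n'+1) m τ hτ (i+1) hin' hc
        omega
      rw [appv_le (n'+1) m τ hτ i hin (by omega)]
      omega
    have hp := pointwise (n'+1) m s (appv (n'+1) τ i) (appv (n'+1) τ (i+1)) hm hs1 hs2 hG1 hG2 hne h1 h2
    rw [← Nat.mul_add, ← Nat.mul_add, hp]
  have hsum := Finset.sum_congr rfl key
  rw [Finset.sum_add_distrib, Finset.sum_add_distrib] at hsum
  -- identify the Fstat sums
  have hFnew : Fstat (n'+1) (kappa (n'+1) m ((n'+1)-m-s) * τ)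
      = ∑ i ∈ Finset.range n', (i+1) * (if appv (n'+1) (kappa (n'+1) m ((n'+1)-m-s) * τ) i < appv (n'+1) (kappa (n'+1) m ((n'+1)-m-s) * τ) (i+1) then 1 else 0) := by
    rw [Fstat_range (n'+1) (by omega), hNsub]
  have hFold : Fstat (n'+1) τ
      = ∑ i ∈ Finset.range n', (i+1) * (if appv (n'+1) τ i < appv (n'+1) τ (i+1) then 1 else 0) := by
    rw [Fstat_range (n'+1) (by omega), hNsub]
  -- shifted sum equals full sum
  have hP : ∑ i ∈ Finset.range (n'+1), i * (if m + s ≤ appv (n'+1) τ i then 1 else 0)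
      = (∑ i ∈ Finset.range n', (i+1) * (if m + s ≤ appv (n'+1) τ (i+1) then 1 else 0))
        + 0 * (if m + s ≤ appv (n'+1) τ 0 then 1 else 0) :=
    Finset.sum_range_succ' (fun i => i * (if m + s ≤ appv (n'+1) τ i then 1 else 0)) n'
  have hPP : ∑ i ∈ Finset.range (n'+1), i * (if m + s ≤ appv (n'+1) τ i then 1 else 0)
      = (∑ i ∈ Finset.range n', i * (if m + s ≤ appv (n'+1) τ i then 1 else 0))
        + n' * (if m + s ≤ appv (n'+1) τ n' then 1 else 0) :=
    Finset.sum_range_succ (fun i => i * (if m + s ≤ appv (n'+1) τ i then 1 else 0)) n'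
  have hQQ : ∑ i ∈ Finset.range (n'+1), (if m + s ≤ appv (n'+1) τ i then 1 else 0)
      = (∑ i ∈ Finset.range n', (if m + s ≤ appv (n'+1) τ i then 1 else 0))
        + (if m + s ≤ appv (n'+1) τ n' then 1 else 0) :=
    Finset.sum_range_succ (fun i => (if m + s ≤ appv (n'+1) τ i then 1 else 0)) n'
  have hsplit : ∑ i ∈ Finset.range n', (i+1) * (if m + s ≤ appv (n'+1) τ i then 1 else 0)
      = (∑ i ∈ Finset.range n', i * (if m + s ≤ appv (n'+1) τ i then 1 else 0))
        + ∑ i ∈ Finset.range n', (if m + s ≤ appv (n'+1) τ i then 1 else 0) := by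
    rw [← Finset.sum_add_distrib]
    apply Finset.sum_congr rfl
    intro i _
    ring
  -- total count
  have hQ : ∑ i ∈ Finset.range (n'+1), (if m + s ≤ appv (n'+1) τ i then 1 else 0) = n' + 1 - (m + s) := by
    have e1 : ∑ i ∈ Finset.range (n'+1), (if m + s ≤ appv (n'+1) τ i then 1 else 0)
        = ∑ x : Fin (n'+1), (if m + s ≤ ((τ x : Fin (n'+1)) : ℕ) then 1 else 0) := by
      rw [← Fin.sum_univ_eq_sum_range (fun i => if m + s ≤ appv (n'+1) τ i then 1 else 0) (n'+1)]
      apply Finset.sum_congr rfl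
      intro x _
      congr 1
      unfold appv
      rw [dif_pos x.isLt]
    rw [e1, Equiv.sum_comp τ (fun x : Fin (n'+1) => if m + s ≤ (x : ℕ) then 1 else 0),
      Fin.sum_univ_eq_sum_range (fun i => if m + s ≤ i then 1 else 0) (n'+1),
      sum_indicator]
  rw [hFnew, hFold]
  by_cases hc : m + s ≤ appv (n'+1) τ n'
  · rw [if_pos hc] at hPP hQQ ⊢
    omega
  · rw [if_neg hc] at hPP hQQ ⊢
    omega

lemma invariant (n : ℕ) (hn : 2 ≤ n) (b : ℕ → ℕ) (hb : ∀ j, j < n → 1 ≤ b j ∧ b j ≤ j + 1) :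
    ∀ k, k ≤ n → Nat.ModEq n (Fstat n (tauP n b k) + ∑ j ∈ Finset.range k, b j)
      (Fstat n 1 + ∑ j ∈ Finset.range k, (j+1)) := by
  intro k hk
  induction k with
  | zero =>
    show Nat.ModEq n (Fstat n (tauP n b 0) + ∑ j ∈ Finset.range 0, b j) _
    have h0 : tauP n b 0 = 1 := rfl
    rw [h0]
    rfl
  | succ k ih =>
    have hk' : k < n := hk
    have hbk := hb k hk'
    have hm : n - 1 - k < n := by omega
    have hs2 : b k ≤ n - (n - 1 - k) := by omega
    have hτfix : ∀ j : Fin n, (j:ℕ) ≤ n - 1 - k → tauP n b k j = j := by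
      intro j hj
      exact tauP_fix n b k (le_of_lt hk') j (by omega)
    have hstep := step n (n-1-k) (b k) hm hbk.1 hs2 (tauP n b k) hτfix
    have e : n - (n-1-k) - b k = k + 1 - b k := by omega
    rw [e] at hstep
    obtain ⟨I, hstep'⟩ : ∃ I, Fstat n (kappa n (n-1-k) (k+1 - b k) * tauP n b k) + n * I
        = Fstat n (tauP n b k) + (k + 1 - b k) := ⟨_, hstep⟩
    have htau : tauP n b (k+1) = kappa n (n-1-k) (k+1 - b k) * tauP n b k := rfl
    rw [Finset.sum_range_succ, Finset.sum_range_succ, htau]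
    have base : n * I ≡ 0 [MOD n] := Nat.modEq_zero_iff_dvd.mpr ⟨I, rfl⟩
    have heq : Fstat n (kappa n (n-1-k) (k+1 - b k) * tauP n b k) + (∑ j ∈ Finset.range k, b j + b k) + n * I
        = Fstat n (tauP n b k) + ∑ j ∈ Finset.range k, b j + (k+1) := by omega
    have t0 : Fstat n (kappa n (n-1-k) (k+1 - b k) * tauP n b k) + (∑ j ∈ Finset.range k, b j + b k) + n * I
        ≡ Fstat n (kappa n (n-1-k) (k+1 - b k) * tauP n b k) + (∑ j ∈ Finset.range k, b j + b k) [MOD n] := by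
      have := Nat.ModEq.add_left (Fstat n (kappa n (n-1-k) (k+1 - b k) * tauP n b k)
        + (∑ j ∈ Finset.range k, b j + b k)) base
      simpa using this
    have t1 := (t0.symm.trans (by rw [heq] : _ ≡ _ [MOD n]))
    have t2 := t1.trans ((ih (le_of_lt hk')).add_right (k+1))
    rw [Nat.add_assoc] at t2
    exact t2

theorem stmt_17 (n : ℕ) (hn : 2 ≤ n)
    (R : Equiv.Perm (Fin n) → (Fin n → ℕ))
    (hR1 : ∀ π, R π ∈ Vn n) (hR2 : ∀ π, Phi n (R π) = π)
    (hR3 : ∀ a ∈ Vn n, R (Phi n a) = a)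
    (ρ : Equiv.Perm (Fin n)) :
    ((∑ t, R ρ t) +
      ∑ j ∈ Finset.Icc 1 (n - 1),
        j * (if cinv n ρ (j - 1) < cinv n ρ j then 1 else 0)) % n = 0 := by
  set a := R ρ with ha
  have hVa := hR1 ρ
  set b := Rcomp n a with hbdef
  have hb : ∀ j, j < n → 1 ≤ b j ∧ b j ≤ j + 1 := by
    intro j hj
    have := hVa ⟨j, hj⟩
    rw [hbdef]
    unfold Rcomp
    rw [dif_pos hj]
    exact this
  have h1 : Phi n a = phiAux n b n := phi_eq n a
  have h2 : tauP n b n = (phiAux n b n)⁻¹ := tauP_eq_inv n b (fun j hj => (hb j hj).2) n le_rfl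
  have h3 : tauP n b n = ρ⁻¹ := by rw [h2, ← h1, ha, hR2]
  have hinv := invariant n hn b hb n le_rfl
  rw [h3] at hinv
  -- identify the goal's sum with Fstat
  have hcinv : ∀ j, cinv n ρ j = appv n ρ⁻¹ j := fun j => rfl
  have hF : (∑ j ∈ Finset.Icc 1 (n - 1),
      j * (if cinv n ρ (j - 1) < cinv n ρ j then 1 else 0)) = Fstat n ρ⁻¹ := by
    unfold Fstat
    apply Finset.sum_congr rfl
    intro j _
    rw [hcinv, hcinv]
  -- sum of b over range n equals sum of a over Fin n
  have hsb : ∑ j ∈ Finset.range n, b j = ∑ t, a t := by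
    rw [← Fin.sum_univ_eq_sum_range b n]
    apply Finset.sum_congr rfl
    intro x _
    rw [hbdef]
    unfold Rcomp
    rw [dif_pos x.isLt, Fin.eta]
  -- compute the RHS of the invariant
  have hid : Fstat n (1 : Equiv.Perm (Fin n)) = ∑ i ∈ Finset.range (n-1), (i+1) := by
    rw [Fstat_range n (by omega)]
    apply Finset.sum_congr rfl
    intro i hi
    rw [Finset.mem_range] at hi
    have e1 : appv n (1 : Equiv.Perm (Fin n)) i = i := by
      unfold appv; rw [dif_pos (by omega : i < n)]; rfl
    have e2 : appv n (1 : Equiv.Perm (Fin n)) (i+1) = i+1 := by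
      unfold appv; rw [dif_pos (by omega : i+1 < n)]; rfl
    rw [e1, e2, if_pos (by omega), Nat.mul_one]
  have hshift : ∑ i ∈ Finset.range ((n-1)+1), i
      = (∑ i ∈ Finset.range (n-1), (i+1)) + 0 :=
    Finset.sum_range_succ' (fun i => i) (n-1)
  have hn1 : (n-1)+1 = n := by omega
  rw [hn1] at hshift
  have hplus : ∑ j ∈ Finset.range n, (j+1) = (∑ j ∈ Finset.range n, j) + n := by
    rw [Finset.sum_add_distrib]
    simp
  have hgauss : (∑ i ∈ Finset.range n, i) * 2 = n * (n-1) := Finset.sum_range_id_mul_two n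
  have htot : Fstat n (1 : Equiv.Perm (Fin n)) + ∑ j ∈ Finset.range n, (j+1) = n * n := by
    have hmm : n * (n-1) + n = n * n := by
      calc n * (n-1) + n = n * ((n-1)+1) := (Nat.mul_succ n (n-1)).symm
        _ = n * n := by rw [hn1]
    omega
  rw [htot] at hinv
  -- conclude
  calc ((∑ t, a t) + ∑ j ∈ Finset.Icc 1 (n - 1),
        j * (if cinv n ρ (j - 1) < cinv n ρ j then 1 else 0)) % n
      = (Fstat n ρ⁻¹ + ∑ j ∈ Finset.range n, b j) % n := by rw [hF, hsb, Nat.add_comm]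
    _ = (n * n) % n := hinv
    _ = 0 := Nat.mul_mod_right n n
end

section
/- Let C ⊆ S_n be a single-deletion-correcting permutation code, i.e., for all π, σ ∈ C and all i, j ∈ {0,…,n−1}, if π(κ_{i,1}(k)) = σ(κ_{j,1}(k)) for all k ∈ {0,…,n−2}, then π = σ. Then |C| ≤ (n−1)!. -/
/-!
Moving the entry `n - 1` of `π` to the last position, i.e. passing from `π` to
`π ∘ κ_{i,1}` with `i = π⁻¹(n - 1)`, gives a permutation fixing `n - 1` whose first `n - 1`
values are `π` with position `i` deleted. For a single-deletion-correcting code this map is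
injective, and there are only `(n - 1)!` permutations fixing a point.
-/

open Equiv

theorem Set.ncard_le_factorial_of_injOn_fixing {α : Type*} [Fintype α] [DecidableEq α] (a : α)
    {C : Set (Perm α)} (f : Perm α → Perm α) (hfix : ∀ π, f π a = a) (hinj : C.InjOn f) :
    C.ncard ≤ (Fintype.card α - 1).factorial := by
  have hstab : Nat.card {σ : Perm α // σ a = a} = (Fintype.card α - 1).factorial := by
    have e : {σ : Perm α // σ a = a} ≃ Perm {x : α // x ≠ a} :=
      (Equiv.subtypeEquivRight fun σ => by simp).trans
        (Perm.subtypeEquivSubtypePerm (· ≠ a)).symm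
    rw [Nat.card_congr e, Nat.card_perm, Nat.card_eq_fintype_card, Fintype.card_subtype_compl,
      Fintype.card_subtype_eq]
  calc C.ncard = (f '' C).ncard := hinj.ncard_image.symm
    _ ≤ {σ : Perm α | σ a = a}.ncard :=
      Set.ncard_le_ncard (Set.image_subset_iff.mpr fun π _ => hfix π) (Set.toFinite _)
    _ = (Fintype.card α - 1).factorial := by rw [← hstab, ← Nat.card_coe_set_eq, Set.coe_ofPred]

theorem kappa_one_apply_last (m : ℕ) (i : Fin (m + 1)) :
    kappa (m + 1) i 1 (Fin.last m) = i := by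
  have hi := i.isLt
  have hwrap : m - i + 1 = m + 1 - i := by omega
  ext
  simp only [kappa, Equiv.ofBijective_apply, kappaFun, Fin.val_last, hwrap, Nat.mod_self]
  split_ifs <;> simp_all

theorem stmt_19 (n : ℕ) (hn : 2 ≤ n) (C : Set (Equiv.Perm (Fin n)))
    (hC : ∀ π ∈ C, ∀ σ ∈ C, ∀ i j : Fin n,
      (∀ k : Fin n, (k : ℕ) + 2 ≤ n →
        π (kappa n (i : ℕ) 1 k) = σ (kappa n (j : ℕ) 1 k)) → π = σ) :
    C.ncard ≤ Nat.factorial (n - 1) := by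
  obtain ⟨m, rfl⟩ : ∃ m, n = m + 1 := ⟨n - 1, by omega⟩
  simpa using Set.ncard_le_factorial_of_injOn_fixing (Fin.last m)
    (fun π => π * kappa (m + 1) (π⁻¹ (Fin.last m)) 1)
    (fun π => by simp [kappa_one_apply_last])
    (fun π hπ σ hσ h => hC π hπ σ hσ _ _ fun k _ => congr($h k))
end
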